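/- If a and b are real numbers with a = Σ_{n≥1} a_n α^n where each a_n ∈ {0,2}, and b = Σ_{n≥1} u_n α^n where each u_n ∈ {0,2,-2}, and 0 < α < 1/3, then a − b belongs to the central α-Cantor set C_α if and only if a_n − u_n ∈ {0,2} for every n ∈ ℕ. -/

import Mathlib

/-- The central α-Cantor set: sums Σ_{n≥1} ε_n α^n with ε_n ∈ {0,2}. -/
def centralCantor (α : ℝ) : Set ℝ :=
  {x | ∃ ε : ℕ → ℝ, (∀ n, ε n = 0 ∨ ε n = 2) ∧ x = ∑' n : ℕ, ε n * α ^ (n + 1)}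

lemma summable_aux {α : ℝ} (hα0 : 0 < α) (hα1 : α < 1) {c : ℕ → ℝ}
    (hc : ∀ n, |c n| ≤ 4) : Summable (fun n => c n * α ^ (n + 1)) := by
  have hg : Summable (fun n : ℕ => 4 * α ^ (n + 1)) := by
    apply Summable.mul_left
    exact ((summable_geometric_of_lt_one hα0.le hα1).mul_left α).congr
      (fun n => by ring)
  refine Summable.of_norm_bounded hg (fun n => ?_)
  rw [Real.norm_eq_abs, abs_mul, abs_pow, abs_of_pos hα0]
  exact mul_le_mul_of_nonneg_right (hc n) (by positivity)

set_option maxHeartbeats 1000000 in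
lemma key {α : ℝ} (hα0 : 0 < α) (hα : α < 1/3) {c : ℕ → ℝ}
    (hc : ∀ n, c n = 0 ∨ 2 ≤ |c n|) (hb : ∀ n, |c n| ≤ 4)
    (hsum : ∑' n : ℕ, c n * α ^ (n + 1) = 0) : ∀ n, c n = 0 := by
  have hα1 : α < 1 := hα.trans (by norm_num)
  have hS := summable_aux hα0 hα1 hb
  intro n
  induction n using Nat.strong_induction_on with
  | _ n ih =>
  by_contra hne
  have h2 : 2 ≤ |c n| := (hc n).resolve_left hne
  -- ∑ over range n is 0
  have hsplit := Summable.sum_add_tsum_nat_add n hS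
  have hrange : ∑ i ∈ Finset.range n, c i * α ^ (i + 1) = 0 := by
    apply Finset.sum_eq_zero
    intro i hi
    rw [ih i (Finset.mem_range.mp hi), zero_mul]
  rw [hsum, hrange, zero_add] at hsplit
  -- so tail sum = 0
  have htail : (∑' i : ℕ, c (i + n) * α ^ (i + n + 1)) = 0 := hsplit
  have hStail : Summable (fun i => c (i + n) * α ^ (i + n + 1)) :=
    (summable_nat_add_iff (f := fun m => c m * α ^ (m + 1)) n).mpr hS
  rw [Summable.tsum_eq_zero_add hStail] at htail
  have heq : c n * α ^ (n + 1) = -∑' i : ℕ, c (i + 1 + n) * α ^ (i + 1 + n + 1) := by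
    simp only [zero_add] at htail
    linarith
  have hStail2 : Summable (fun i => c (i + 1 + n) * α ^ (i + 1 + n + 1)) :=
    ((summable_nat_add_iff (f := fun m => c m * α ^ (m + 1)) (n + 1)).mpr hS).congr (fun i => by ring_nf)
  have hgS : Summable (fun i : ℕ => 4 * α ^ (i + n + 2)) := by
    apply Summable.mul_left
    exact ((summable_geometric_of_lt_one hα0.le hα1).mul_left (α ^ (n + 2))).congr
      (fun i => by rw [← pow_add]; ring_nf)
  have hnormS : Summable (fun i : ℕ => ‖c (i + 1 + n) * α ^ (i + 1 + n + 1)‖) := by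
    simpa only [Real.norm_eq_abs] using hStail2.abs
  have hb1 : |∑' i : ℕ, c (i + 1 + n) * α ^ (i + 1 + n + 1)| ≤
      ∑' i : ℕ, 4 * α ^ (i + n + 2) := by
    calc |∑' i : ℕ, c (i + 1 + n) * α ^ (i + 1 + n + 1)|
        ≤ ∑' i : ℕ, |c (i + 1 + n) * α ^ (i + 1 + n + 1)| := by
          have := norm_tsum_le_tsum_norm hnormS
          simpa only [Real.norm_eq_abs] using this
      _ ≤ ∑' i : ℕ, 4 * α ^ (i + n + 2) := by
          refine Summable.tsum_le_tsum (fun i => ?_) hStail2.abs hgS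
          rw [abs_mul, abs_pow, abs_of_pos hα0]
          have : i + 1 + n + 1 = i + n + 2 := by ring
          rw [this]
          exact mul_le_mul_of_nonneg_right (hb _) (by positivity)
  have hval : ∑' i : ℕ, 4 * α ^ (i + n + 2) = 4 * α ^ (n + 2) / (1 - α) := by
    calc ∑' i : ℕ, 4 * α ^ (i + n + 2) = ∑' i : ℕ, (4 * α ^ (n + 2)) * α ^ i := by
          congr 1; funext i; rw [show i + n + 2 = n + 2 + i by ring, pow_add]; ring
      _ = (4 * α ^ (n + 2)) * (1 - α)⁻¹ := by
          rw [tsum_mul_left, tsum_geometric_of_lt_one hα0.le hα1]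
      _ = 4 * α ^ (n + 2) / (1 - α) := by ring
  have h1α : 0 < 1 - α := by linarith
  have hlt : 4 * α ^ (n + 2) / (1 - α) < 2 * α ^ (n + 1) := by
    rw [div_lt_iff₀ h1α]
    have he : α ^ (n + 2) = α ^ (n + 1) * α := by ring
    nlinarith [pow_pos hα0 (n + 1)]
  have hge : 2 * α ^ (n + 1) ≤ |c n * α ^ (n + 1)| := by
    rw [abs_mul, abs_pow, abs_of_pos hα0]
    exact mul_le_mul_of_nonneg_right h2 (pow_pos hα0 _).le
  rw [heq, abs_neg] at hge
  linarith

theorem stmt_1 (α : ℝ) (hα0 : 0 < α) (hα : α < 1/3)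
    (a u : ℕ → ℝ)
    (ha : ∀ n, a n = 0 ∨ a n = 2)
    (hu : ∀ n, u n = 0 ∨ u n = 2 ∨ u n = -2) :
    (∑' n : ℕ, a n * α ^ (n + 1)) - (∑' n : ℕ, u n * α ^ (n + 1)) ∈ centralCantor α ↔
      ∀ n, a n - u n = 0 ∨ a n - u n = 2 := by
  have hα1 : α < 1 := by linarith
  have hba : ∀ n, |a n| ≤ 4 := fun n => by rcases ha n with h | h <;> rw [h] <;> norm_num
  have hbu : ∀ n, |u n| ≤ 4 := fun n => by rcases hu n with h | h | h <;> rw [h] <;> norm_num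
  have Sa := summable_aux hα0 hα1 hba
  have Su := summable_aux hα0 hα1 hbu
  have Sd : Summable (fun n => (a n - u n) * α ^ (n + 1)) :=
    (Sa.sub Su).congr (fun n => by ring)
  have hdsum : (∑' n : ℕ, a n * α ^ (n + 1)) - (∑' n : ℕ, u n * α ^ (n + 1)) =
      ∑' n : ℕ, (a n - u n) * α ^ (n + 1) := by
    rw [← Summable.tsum_sub Sa Su]; congr 1; funext n; ring
  constructor
  · rintro ⟨ε, hε, hx⟩ n
    have hεb : ∀ m, |ε m| ≤ 4 := fun m => by rcases hε m with h | h <;> rw [h] <;> norm_num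
    have Sε := summable_aux hα0 hα1 hεb
    set c : ℕ → ℝ := fun m => (a m - u m) - ε m with hcdef
    have hc : ∀ m, c m = 0 ∨ 2 ≤ |c m| := by
      intro m
      rcases ha m with h1 | h1 <;> rcases hu m with h2 | h2 | h2 <;>
        rcases hε m with h3 | h3 <;> simp only [hcdef, h1, h2, h3] <;> norm_num
    have hb : ∀ m, |c m| ≤ 4 := by
      intro m
      rcases ha m with h1 | h1 <;> rcases hu m with h2 | h2 | h2 <;>
        rcases hε m with h3 | h3 <;> simp only [hcdef, h1, h2, h3] <;> norm_num
    have hsum0 : ∑' m : ℕ, c m * α ^ (m + 1) = 0 := by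
      have h1 : ∑' m : ℕ, c m * α ^ (m + 1) =
          (∑' m : ℕ, (a m - u m) * α ^ (m + 1)) - ∑' m : ℕ, ε m * α ^ (m + 1) := by
        rw [← Summable.tsum_sub Sd Sε]; congr 1; funext m; simp only [hcdef]; ring
      rw [h1, ← hdsum, hx, sub_self]
    have hzero := key hα0 hα hc hb hsum0 n
    have hεn : a n - u n = ε n := by
      have : (a n - u n) - ε n = 0 := hzero
      linarith
    rw [hεn]; exact hε n
  · intro h
    exact ⟨fun n => a n - u n, h, hdsum⟩
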